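/- arXiv:1607.07942 — 6 statements merged into one kernel-verified Lean document; each statement's English description precedes it below -/
import Mathlib

section
/- The function S(ξ) = Σ_{j=1}^m ξ_j log ξ_j − Σ_{j=1}^m (1 − ξ_j) log(1 − ξ_j) is convex on the probability simplex { ξ ∈ ℝ^m : ξ_j ≥ 0 for all j, Σ_j ξ_j = 1 }. -/
/-!
Along a segment `t ↦ x + t (y - x)` of the simplex the function is smooth wherever it is not
constant, with second derivative `∑ d_j² (1/u_j - 1/(1 - u_j))`, where `u = x + t d`, `d = y - x`
and `∑ d_j = 0`. Only a coordinate with `u_i > 1/2` contributes negatively, and there is at most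
one. Writing `d_i = -∑_{j ≠ i} d_j`, the Cauchy–Schwarz inequality in Sedrakyan's form shows that
the other terms compensate it, because
`∑_{j ≠ i} (1/u_j - 1/(1 - u_j))⁻¹ ≤ (1/(1 - u_i) - 1/u_i)⁻¹` when `∑_{j ≠ i} u_j ≤ 1 - u_i`.
-/

open Finset Set Real

theorem convexOn_of_forall_segment {E : Type*} [AddCommGroup E] [Module ℝ E] {s : Set E}
    {f : E → ℝ} (hs : Convex ℝ s)
    (h : ∀ x ∈ s, ∀ y ∈ s, ConvexOn ℝ (Icc 0 1) fun t : ℝ => f (x + t • (y - x))) :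
    ConvexOn ℝ s f := by
  refine ⟨hs, fun x hx y hy a b ha hb hab => ?_⟩
  have key := (h x hx y hy).2 (left_mem_Icc.2 zero_le_one) (right_mem_Icc.2 zero_le_one) ha hb hab
  have hcomb : x + b • (y - x) = a • x + b • y := by
    rw [eq_sub_of_add_eq hab, sub_smul, one_smul, smul_sub]; abel
  simpa [hcomb] using key

theorem HasDerivAt.comp_add_mul {f : ℝ → ℝ} {f' c d t : ℝ}
    (hf : d ≠ 0 → HasDerivAt f f' (c + t * d)) :
    HasDerivAt (fun s => f (c + s * d)) (f' * d) t := by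
  by_cases hd : d = 0
  · simpa [hd] using hasDerivAt_const t (f c)
  · exact (hf hd).comp t ((hasDerivAt_mul_const d).const_add c)

theorem sq_sum_mul_le_sum_sq_mul_inv_sub_inv {ι : Type*} {s : Finset ι} {u d : ι → ℝ} {a : ℝ}
    (ha : 1 / 2 < a) (hu : ∀ j ∈ s, 0 < u j) (hsum : ∑ j ∈ s, u j ≤ 1 - a) :
    (∑ j ∈ s, d j) ^ 2 * ((1 - a)⁻¹ - a⁻¹) ≤ ∑ j ∈ s, d j ^ 2 * ((u j)⁻¹ - (1 - u j)⁻¹) := by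
  rcases s.eq_empty_or_nonempty with rfl | hs
  · simp
  have ha1 : a < 1 := by linarith [sum_pos hu hs]
  have hu_le : ∀ j ∈ s, u j ≤ 1 - a := fun j hj =>
    (single_le_sum (fun i hi => (hu i hi).le) hj).trans hsum
  set G : ι → ℝ := fun j => u j * (1 - u j) / (1 - 2 * u j) with hG
  have hG_pos : ∀ j ∈ s, 0 < G j := fun j hj => by
    have := hu j hj; have := hu_le j hj
    exact div_pos (mul_pos (by linarith) (by linarith)) (by linarith)
  have hG_inv : ∀ j ∈ s, (u j)⁻¹ - (1 - u j)⁻¹ = (G j)⁻¹ := fun j hj => by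
    have := hu j hj; have := hu_le j hj
    rw [hG, inv_div]
    field_simp [show 1 - u j ≠ 0 by linarith]
    ring
  -- `G u / u` is increasing on `(0, 1/2)`, so `∑ G (u j) ≤ G (∑ u j) ≤ G (1 - a)`.
  have hG_sum : ∑ j ∈ s, G j ≤ ((1 - a)⁻¹ - a⁻¹)⁻¹ := by
    have h2a : 0 < 2 * a - 1 := by linarith
    calc ∑ j ∈ s, G j ≤ ∑ j ∈ s, u j * (a / (2 * a - 1)) := by
          refine sum_le_sum fun j hj => ?_
          have := hu j hj; have := hu_le j hj
          show u j * (1 - u j) / (1 - 2 * u j) ≤ _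
          rw [mul_div_assoc]
          refine mul_le_mul_of_nonneg_left ?_ (hu j hj).le
          rw [div_le_div_iff₀ (by linarith) h2a]
          nlinarith
      _ = (∑ j ∈ s, u j) * (a / (2 * a - 1)) := by rw [sum_mul]
      _ ≤ (1 - a) * (a / (2 * a - 1)) := by gcongr
      _ = ((1 - a)⁻¹ - a⁻¹)⁻¹ := by
          field_simp [show 1 - a ≠ 0 by linarith]
          ring
  have hc : 0 < (1 - a)⁻¹ - a⁻¹ := by
    rw [sub_pos]; exact inv_strictAnti₀ (by linarith) (by linarith)
  calc (∑ j ∈ s, d j) ^ 2 * ((1 - a)⁻¹ - a⁻¹)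
      ≤ (∑ j ∈ s, d j) ^ 2 / ∑ j ∈ s, G j := by
        rw [div_eq_mul_inv]
        gcongr
        exact (le_inv_comm₀ hc (sum_pos hG_pos hs)).2 hG_sum
    _ ≤ ∑ j ∈ s, d j ^ 2 / G j := sq_sum_div_le_sum_sq_div s d hG_pos
    _ = ∑ j ∈ s, d j ^ 2 * ((u j)⁻¹ - (1 - u j)⁻¹) :=
        sum_congr rfl fun j hj => by rw [hG_inv j hj, div_eq_mul_inv]

theorem sum_sq_mul_inv_sub_inv_nonneg {ι : Type*} [Fintype ι] {u d : ι → ℝ}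
    (hu0 : ∀ j, 0 ≤ u j) (hu : ∀ j, d j ≠ 0 → 0 < u j) (hsum : ∑ j, u j ≤ 1)
    (hd : ∑ j, d j = 0) :
    0 ≤ ∑ j, d j ^ 2 * ((u j)⁻¹ - (1 - u j)⁻¹) := by
  classical
  by_cases hbig : ∃ i, d i ≠ 0 ∧ 1 / 2 < u i
  · obtain ⟨i, hdi, hui⟩ := hbig
    set s := (Finset.univ.erase i).filter (fun j => d j ≠ 0)
    have hs_d : ∑ j ∈ s, d j = -d i := by
      rw [sum_filter_ne_zero, sum_erase_eq_sub (mem_univ i), hd, zero_sub]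
    have hs_u : ∑ j ∈ s, u j ≤ 1 - u i :=
      calc ∑ j ∈ s, u j ≤ ∑ j ∈ Finset.univ.erase i, u j :=
            sum_le_sum_of_subset_of_nonneg (filter_subset _ _) fun j _ _ => hu0 j
        _ ≤ 1 - u i := by rw [sum_erase_eq_sub (mem_univ i)]; linarith
    have hs := sq_sum_mul_le_sum_sq_mul_inv_sub_inv (d := d) hui
      (fun j hj => hu j (mem_filter.1 hj).2) hs_u
    have hsplit : ∑ j, d j ^ 2 * ((u j)⁻¹ - (1 - u j)⁻¹)
        = d i ^ 2 * ((u i)⁻¹ - (1 - u i)⁻¹) + ∑ j ∈ s, d j ^ 2 * ((u j)⁻¹ - (1 - u j)⁻¹) := by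
      rw [← add_sum_erase _ _ (mem_univ i), sum_filter_of_ne]
      intro j _ h hdj
      simp [hdj] at h
    rw [hsplit]
    rw [hs_d, neg_sq] at hs
    linarith
  · push Not at hbig
    refine sum_nonneg fun j _ => ?_
    by_cases hdj : d j = 0
    · simp [hdj]
    · have hpos := hu j hdj
      have hhalf := hbig j hdj
      exact mul_nonneg (sq_nonneg _) (sub_nonneg.2 (inv_anti₀ hpos (by linarith)))

noncomputable def mulLogDiff (u : ℝ) : ℝ := u * log u - (1 - u) * log (1 - u)

theorem continuous_mulLogDiff : Continuous mulLogDiff :=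
  continuous_mul_log.sub (continuous_mul_log.comp (continuous_sub_left 1))

theorem hasDerivAt_mulLogDiff {u : ℝ} (h0 : u ≠ 0) (h1 : u ≠ 1) :
    HasDerivAt mulLogDiff (log u + log (1 - u) + 2) u :=
  ((hasDerivAt_mul_log h0).sub ((hasDerivAt_mul_log (sub_ne_zero.2 h1.symm)).comp u
    ((hasDerivAt_id u).const_sub 1))).congr_deriv (by ring)

theorem hasDerivAt_log_add_log_one_sub {u : ℝ} (h0 : u ≠ 0) (h1 : u ≠ 1) :
    HasDerivAt (fun v => log v + log (1 - v) + 2) (u⁻¹ - (1 - u)⁻¹) u :=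
  (((hasDerivAt_log h0).add ((hasDerivAt_log (sub_ne_zero.2 h1.symm)).comp u
    ((hasDerivAt_id u).const_sub 1))).add_const 2).congr_deriv (by ring)

theorem add_mul_sub_mem_Ioo {a b t : ℝ} (ha : a ∈ Icc (0 : ℝ) 1) (hb : b ∈ Icc (0 : ℝ) 1)
    (hab : a ≠ b) (ht : t ∈ Ioo (0 : ℝ) 1) : a + t * (b - a) ∈ Ioo (0 : ℝ) 1 := by
  obtain ⟨ha0, ha1⟩ := ha
  obtain ⟨hb0, hb1⟩ := hb
  obtain ⟨ht0, ht1⟩ := ht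
  rcases hab.lt_or_gt with h | h
  · constructor <;> nlinarith
  · constructor <;> nlinarith

theorem convexOn_sum_mulLogDiff_segment {ι : Type*} [Fintype ι] {x y : ι → ℝ}
    (hx : x ∈ stdSimplex ℝ ι) (hy : y ∈ stdSimplex ℝ ι) :
    ConvexOn ℝ (Icc 0 1) fun t : ℝ => ∑ j, mulLogDiff (x j + t * (y j - x j)) := by
  have hmem : ∀ t ∈ Ioo (0 : ℝ) 1, ∀ j, y j - x j ≠ 0 → x j + t * (y j - x j) ∈ Ioo (0 : ℝ) 1 :=
    fun t ht j hj => add_mul_sub_mem_Ioo ⟨hx.1 j, stdSimplex.le_one ⟨x, hx⟩ j⟩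
      ⟨hy.1 j, stdSimplex.le_one ⟨y, hy⟩ j⟩ (sub_ne_zero.1 hj).symm ht
  refine convexOn_of_hasDerivWithinAt2_nonneg (convex_Icc 0 1)
    (f' := fun t => ∑ j, (log (x j + t * (y j - x j)) + log (1 - (x j + t * (y j - x j))) + 2)
      * (y j - x j))
    (f'' := fun t => ∑ j, ((x j + t * (y j - x j))⁻¹ - (1 - (x j + t * (y j - x j)))⁻¹)
      * (y j - x j) * (y j - x j))
    ?_ ?_ ?_ ?_
  · exact (continuous_finsetSum _ fun j _ => continuous_mulLogDiff.comp (by fun_prop)).continuousOn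
  · rw [interior_Icc]
    intro t ht
    refine (HasDerivAt.fun_sum fun j _ => HasDerivAt.comp_add_mul fun hj => ?_).hasDerivWithinAt
    obtain ⟨h0, h1⟩ := hmem t ht j hj
    exact hasDerivAt_mulLogDiff h0.ne' h1.ne
  · rw [interior_Icc]
    intro t ht
    refine (HasDerivAt.fun_sum fun j _ =>
      (HasDerivAt.comp_add_mul (f := fun v => log v + log (1 - v) + 2) fun hj => ?_).mul_const
        (y j - x j)).hasDerivWithinAt
    obtain ⟨h0, h1⟩ := hmem t ht j hj
    exact hasDerivAt_log_add_log_one_sub h0.ne' h1.ne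
  · rw [interior_Icc]
    intro t ht
    have h := sum_sq_mul_inv_sub_inv_nonneg (u := fun j => x j + t * (y j - x j))
      (d := fun j => y j - x j) (fun j => by nlinarith [hx.1 j, hy.1 j, ht.1, ht.2])
      (fun j hj => (hmem t ht j hj).1)
      (by simp [sum_add_distrib, ← mul_sum, sum_sub_distrib, hx.2, hy.2])
      (by simp [sum_sub_distrib, hx.2, hy.2])
    convert h using 2 with j
    ring

theorem stmt_2_general (m : ℕ) :
    ConvexOn ℝ {ξ : Fin m → ℝ | (∀ j, 0 ≤ ξ j) ∧ ∑ j, ξ j = 1}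
      (fun ξ => ∑ j, ξ j * Real.log (ξ j)
        - ∑ j, (1 - ξ j) * Real.log (1 - ξ j)) :=
  (convexOn_of_forall_segment (f := fun ξ : Fin m → ℝ => ∑ j, mulLogDiff (ξ j))
    (convex_stdSimplex ℝ (Fin m)) fun _ hx _ hy => convexOn_sum_mulLogDiff_segment hx hy).congr
    fun ξ _ => sum_sub_distrib (fun j => ξ j * log (ξ j)) fun j => (1 - ξ j) * log (1 - ξ j)

theorem stmt_2 (m : ℕ) (hm : 1 ≤ m) :
    ConvexOn ℝ {ξ : Fin m → ℝ | (∀ j, 0 ≤ ξ j) ∧ ∑ j, ξ j = 1}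
      (fun ξ => ∑ j, ξ j * Real.log (ξ j)
        - ∑ j, (1 - ξ j) * Real.log (1 - ξ j)) :=
  stmt_2_general m
end

section
/- For a joint probability distribution q on a product of finite types α × β, the conditional entropy H(α|β) defined by H(α|β) = −Σ_{a,b} q(a,b) log( q(a,b) / Σ_{a'} q(a',b) ) is a concave function of the joint distribution q (on the set of probability distributions on α × β). -/
/-! The summand `q(a,b) log (q(a,b) / q_β(b))`, where `q_β(b) = ∑ a', q(a',b)`, is the perspective
`(u, v) ↦ u log (u / v)` of the convex function `x ↦ x log x`, evaluated at the pair
`(q(a,b), q_β(b))`, which depends linearly on `q`. A perspective is jointly convex: being positively homogeneous, it suffices that it be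
subadditive, which is the two-term log-sum inequality. Summing and negating gives concavity. -/

open Real Finset

theorem ConvexOn.fun_sum {𝕜 E β ι : Type*} [Semiring 𝕜] [PartialOrder 𝕜] [AddCommMonoid E]
    [AddCommMonoid β] [PartialOrder β] [IsOrderedAddMonoid β] [SMul 𝕜 E] [DistribMulAction 𝕜 β]
    {s : Set E} {t : Finset ι} {f : ι → E → β} (hs : Convex 𝕜 s)
    (hf : ∀ i ∈ t, ConvexOn 𝕜 s (f i)) : ConvexOn 𝕜 s fun x ↦ ∑ i ∈ t, f i x := by
  classical
  induction t using Finset.induction_on with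
  | empty => exact ⟨hs, fun _ _ _ _ _ _ _ _ _ ↦ by simp⟩
  | insert i t hi ih =>
    simp only [Finset.sum_insert hi]
    exact (hf i (mem_insert_self i t)).add (ih fun j hj ↦ hf j (mem_insert_of_mem hj))

theorem mul_log_div_add_le {u₀ v₀ u₁ v₁ : ℝ} (hu₀ : 0 ≤ u₀) (huv₀ : u₀ ≤ v₀) (hu₁ : 0 ≤ u₁)
    (huv₁ : u₁ ≤ v₁) :
    (u₀ + u₁) * log ((u₀ + u₁) / (v₀ + v₁)) ≤ u₀ * log (u₀ / v₀) + u₁ * log (u₁ / v₁) := by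
  rcases (hu₀.trans huv₀).eq_or_lt with hv₀ | hv₀
  · obtain rfl : u₀ = 0 := le_antisymm (hv₀ ▸ huv₀) hu₀
    simp [← hv₀]
  rcases (hu₁.trans huv₁).eq_or_lt with hv₁ | hv₁
  · obtain rfl : u₁ = 0 := le_antisymm (hv₁ ▸ huv₁) hu₁
    simp [← hv₁]
  have hv : 0 < v₀ + v₁ := add_pos hv₀ hv₁
  -- convexity of `x ↦ x log x` at `u₀ / v₀` and `u₁ / v₁`, with weights proportional to `v₀, v₁`
  have key := convexOn_mul_log.2 (Set.mem_Ici.2 (div_nonneg hu₀ hv₀.le))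
    (Set.mem_Ici.2 (div_nonneg hu₁ hv₁.le)) (div_nonneg hv₀.le hv.le) (div_nonneg hv₁.le hv.le)
    (by rw [← add_div, div_self hv.ne'])
  have hmean : v₀ / (v₀ + v₁) * (u₀ / v₀) + v₁ / (v₀ + v₁) * (u₁ / v₁) = (u₀ + u₁) / (v₀ + v₁) := by
    field_simp
  rw [smul_eq_mul, smul_eq_mul, hmean, smul_eq_mul, smul_eq_mul] at key
  calc (u₀ + u₁) * log ((u₀ + u₁) / (v₀ + v₁))
      = (v₀ + v₁) * ((u₀ + u₁) / (v₀ + v₁) * log ((u₀ + u₁) / (v₀ + v₁))) := by field_simp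
    _ ≤ (v₀ + v₁) * (v₀ / (v₀ + v₁) * (u₀ / v₀ * log (u₀ / v₀))
          + v₁ / (v₀ + v₁) * (u₁ / v₁ * log (u₁ / v₁))) := by gcongr
    _ = u₀ * log (u₀ / v₀) + u₁ * log (u₁ / v₁) := by field_simp

theorem mul_mul_log_div_mul {t : ℝ} (ht : 0 ≤ t) (u v : ℝ) :
    t * (u * log (u / v)) = t * u * log (t * u / (t * v)) := by
  rcases ht.eq_or_lt with rfl | ht
  · simp
  · rw [mul_div_mul_left _ _ ht.ne', mul_assoc]

-- On `u ≤ v` the junk value `log (u / 0) = 0` occurs only for `u = 0`, where it is harmless.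
theorem convexOn_mul_log_div :
    ConvexOn ℝ {p : ℝ × ℝ | 0 ≤ p.1 ∧ p.1 ≤ p.2} fun p ↦ p.1 * log (p.1 / p.2) := by
  refine ⟨?_, ?_⟩
  · rintro ⟨x₁, x₂⟩ ⟨hx, hxy⟩ ⟨y₁, y₂⟩ ⟨hy, hyy⟩ a b ha hb -
    simp only [Prod.smul_mk, Prod.mk_add_mk, smul_eq_mul]
    exact ⟨by positivity,
      add_le_add (mul_le_mul_of_nonneg_left hxy ha) (mul_le_mul_of_nonneg_left hyy hb)⟩
  · rintro ⟨x₁, x₂⟩ ⟨hx, hxy⟩ ⟨y₁, y₂⟩ ⟨hy, hyy⟩ a b ha hb -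
    simp only [Prod.smul_mk, Prod.mk_add_mk, smul_eq_mul]
    rw [mul_mul_log_div_mul ha, mul_mul_log_div_mul hb]
    exact mul_log_div_add_le (mul_nonneg ha hx) (mul_le_mul_of_nonneg_left hxy ha)
      (mul_nonneg hb hy) (mul_le_mul_of_nonneg_left hyy hb)

theorem stmt_3_general {α β : Type*} [Fintype α] [Fintype β] :
    ConcaveOn ℝ {q : α × β → ℝ | (∀ x, 0 ≤ q x) ∧ ∑ x, q x = 1}
      (fun q => -∑ a, ∑ b, q (a, b) * Real.log (q (a, b) / ∑ a', q (a', b))) := by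
  have hsimplex : Convex ℝ {q : α × β → ℝ | (∀ x, 0 ≤ q x) ∧ ∑ x, q x = 1} :=
    convex_stdSimplex ℝ _
  refine ConvexOn.neg <| ConvexOn.fun_sum hsimplex fun a _ ↦ ConvexOn.fun_sum hsimplex fun b _ ↦ ?_
  let L : (α × β → ℝ) →ₗ[ℝ] ℝ × ℝ :=
    (LinearMap.proj (a, b)).prod (∑ a', LinearMap.proj (a', b))
  refine ((convexOn_mul_log_div.comp_linearMap L).subset (fun q hq ↦ ?_) hsimplex).congr
    fun q _ ↦ by simp [L]
  exact ⟨hq.1 _, by simpa [L] using single_le_sum (fun a' _ ↦ hq.1 (a', b)) (mem_univ a)⟩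

theorem stmt_3 {α β : Type*} [Fintype α] [Fintype β] [Nonempty α] [Nonempty β] :
    ConcaveOn ℝ {q : α × β → ℝ | (∀ x, 0 ≤ q x) ∧ ∑ x, q x = 1}
      (fun q => -∑ a, ∑ b, q (a, b) * Real.log (q (a, b) / ∑ a', q (a', b))) :=
  stmt_3_general
end

section
/- Let u : (1, ∞) → (1, ∞) be differentiable and satisfy u'(x) ≥ u(x)·log u(x) / (x·log x) for all x > 1. Then v(x) = u(x)^{1−γ} · x^{γ}, for γ ∈ [0,1], satisfies v'(x) ≥ v(x)·log v(x) / (x·log x) for all x > 1. -/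
/-! Since `u, x > 0`, the hypothesis on `u` says `log u / (x log x) ≤ u' / u`: the logarithmic
derivative dominates `log u / (x log x)`. The function `log x` meets the same bound with
equality, and `log v = (1 - γ) log u + γ log x` while `v' / v = (1 - γ) u' / u + γ / x`,
so the bound for `v` is the convex combination of the two. -/

open Real

lemma mul_div_le_iff_div_le_div {f t c f' : ℝ} (hf : 0 < f) :
    f * t / c ≤ f' ↔ t / c ≤ f' / f := by
  rw [le_div_iff₀ hf, mul_div_assoc, mul_comm]

lemma HasDerivAt.rpow_mul_rpow {u : ℝ → ℝ} {u' x : ℝ} (a b : ℝ) (hu : HasDerivAt u u' x)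
    (hux : 0 < u x) (hx : 0 < x) :
    HasDerivAt (fun y => u y ^ a * y ^ b) (u x ^ a * x ^ b * (a * (u' / u x) + b / x)) x := by
  have hua := hu.rpow_const (p := a) (Or.inl hux.ne')
  have hxb := hasDerivAt_rpow_const (p := b) (Or.inl hx.ne')
  refine (hua.mul hxb).congr_deriv ?_
  rw [rpow_sub hux, rpow_sub hx, rpow_one, rpow_one]
  field_simp

lemma log_rpow_mul_rpow {p q : ℝ} (a b : ℝ) (hp : 0 < p) (hq : 0 < q) :
    log (p ^ a * q ^ b) = a * log p + b * log q := by
  rw [log_mul (rpow_pos_of_pos hp a).ne' (rpow_pos_of_pos hq b).ne', log_rpow hp, log_rpow hq]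

theorem stmt_8 (u u' : ℝ → ℝ) (γ : ℝ) (hγ : γ ∈ Set.Icc (0 : ℝ) 1)
    (hu : ∀ x, 1 < x → HasDerivAt u (u' x) x)
    (hur : ∀ x, 1 < x → 1 < u x)
    (hineq : ∀ x, 1 < x → u x * Real.log (u x) / (x * Real.log x) ≤ u' x)
    (v : ℝ → ℝ) (hv : ∀ x, v x = u x ^ (1 - γ) * x ^ γ) :
    ∀ x, 1 < x → v x * Real.log (v x) / (x * Real.log x) ≤ deriv v x := by
  intro x hx
  have hx0 : 0 < x := one_pos.trans hx
  have hux : 0 < u x := one_pos.trans (hur x hx)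
  have hlogx : 0 < log x := log_pos hx
  have hvx : 0 < v x := by rw [hv]; positivity
  have hv' : HasDerivAt v (v x * ((1 - γ) * (u' x / u x) + γ / x)) x := by
    rw [funext hv]; exact (hu x hx).rpow_mul_rpow (1 - γ) γ hux hx0
  have hlogu : log (u x) / (x * log x) ≤ u' x / u x :=
    (mul_div_le_iff_div_le_div hux).mp (hineq x hx)
  rw [hv'.deriv, mul_div_le_iff_div_le_div hvx, mul_div_cancel_left₀ _ hvx.ne', hv,
    log_rpow_mul_rpow _ _ hux hx0]
  calc ((1 - γ) * log (u x) + γ * log x) / (x * log x)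
      = (1 - γ) * (log (u x) / (x * log x)) + γ / x := by field_simp
    _ ≤ (1 - γ) * (u' x / u x) + γ / x := by gcongr; linarith [hγ.2]
end

section
/- Let u : (1, ∞) → (1, ∞) be differentiable and satisfy u'(x) ≥ u(x)·log u(x) / (x·log x) for all x > 1. Then for any θ ∈ [0,1], the function v(x) = θ·u(x) + (1−θ)·x satisfies v'(x) ≥ v(x)·log v(x) / (x·log x) for all x > 1. -/
theorem stmt_9 (u u' : ℝ → ℝ) (θ : ℝ) (hθ : θ ∈ Set.Icc (0 : ℝ) 1)
    (hu : ∀ x, 1 < x → HasDerivAt u (u' x) x)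
    (hur : ∀ x, 1 < x → 1 < u x)
    (hineq : ∀ x, 1 < x → u x * Real.log (u x) / (x * Real.log x) ≤ u' x)
    (v : ℝ → ℝ) (hv : ∀ x, v x = θ * u x + (1 - θ) * x) :
    ∀ x, 1 < x → v x * Real.log (v x) / (x * Real.log x) ≤ deriv v x := by
  intro x hx
  obtain ⟨hθ0, hθ1⟩ := hθ
  have hx0 : (0:ℝ) < x := by linarith
  have hlx : 0 < Real.log x := Real.log_pos hx
  have hxl : 0 < x * Real.log x := mul_pos hx0 hlx
  -- derivative of v
  have hdv : HasDerivAt v (θ * u' x + (1 - θ)) x := by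
    have : HasDerivAt (fun y => θ * u y + (1 - θ) * y) (θ * u' x + (1 - θ) * 1) x :=
      ((hu x hx).const_mul θ).add ((hasDerivAt_id x).const_mul (1 - θ))
    simpa [hv, funext hv, mul_one] using this
  rw [hdv.deriv]
  -- convexity
  have hconv := Real.convexOn_mul_log.2 (Set.mem_Ici.2 (by linarith [hur x hx] : (0:ℝ) ≤ u x))
    (Set.mem_Ici.2 hx0.le) hθ0 (by linarith : (0:ℝ) ≤ 1 - θ) (by ring)
  simp only [smul_eq_mul] at hconv
  have hv' : v x = θ * u x + (1 - θ) * x := hv x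
  rw [hv']
  rw [div_le_iff₀ hxl]
  calc (θ * u x + (1 - θ) * x) * Real.log (θ * u x + (1 - θ) * x)
      ≤ θ * (u x * Real.log (u x)) + (1 - θ) * (x * Real.log x) := hconv
    _ ≤ (θ * u' x + (1 - θ)) * (x * Real.log x) := by
        have h1 := hineq x hx
        rw [div_le_iff₀ hxl] at h1
        nlinarith [mul_le_mul_of_nonneg_left h1 hθ0]
end

section
/- For real numbers c₁, c₂ > 0, weights w_j ≥ 0 (j in a finite index set J, not all zero), and an index j₀ ∈ J, the map y defined on strictly positive vectors x = (x_j)_{j∈J} by y(x) = c₁ / ( c₂ + Σ_{j ≠ j₀} w_j x_j ) is a contraction with respect to the max-log-ratio metric d restricted to sets where d-distances are bounded: specifically, for all strictly positive x, x̃ with max_j x̃_j/x_j ≤ L and max_j x_j/x̃_j ≤ L, one has |log( y(x)/y(x̃) )| ≤ α(L, c₂, w, x) · d(x, x̃) for some α < 1 depending on c₂ > 0, the weights, L, and a lower bound on the entries of x. -/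
/-!
Write `S = ∑_{j ≠ j₀} w_j x_j`, so the quantity to bound is `|log (c₂ + S̃) - log (c₂ + S)|`.
In the coordinate `t = log S` the map `t ↦ log (c₂ + eᵗ)` has derivative `eᵗ / (c₂ + eᵗ)`,
which stays below `M / (c₂ + M) < 1` while `S ≤ M := b ∑_{j ≠ j₀} w_j`. A nonnegative combination
of the `x_j` moves in log scale by at most `max_j |log (x_j / x̃_j)|`, so the mean value theorem
gives the contraction with `α = M / (c₂ + M)`.
-/

open Real Set Finset

lemma abs_log_add_exp_sub_le {c M s t : ℝ} (hc : 0 < c) (hM : 0 < M)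
    (hs : s ≤ log M) (ht : t ≤ log M) :
    |log (c + exp s) - log (c + exp t)| ≤ M / (c + M) * |s - t| := by
  have hderiv : ∀ r, HasDerivAt (fun r => log (c + exp r)) (exp r / (c + exp r)) r :=
    fun r => ((hasDerivAt_exp r).const_add c).log (by positivity)
  have hbound : ∀ r ∈ Iic (log M), ‖exp r / (c + exp r)‖ ≤ M / (c + M) := by
    intro r hr
    have hrM : exp r ≤ M := (exp_le_exp.2 hr).trans_eq (exp_log hM)
    rw [norm_of_nonneg (by positivity), div_le_div_iff₀ (by positivity) (by positivity)]
    nlinarith [exp_pos r]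
  exact (convex_Iic _).norm_image_sub_le_of_norm_hasDerivWithin_le
    (fun r _ => (hderiv r).hasDerivWithinAt) hbound ht hs

lemma abs_log_add_sub_le {c M u v : ℝ} (hc : 0 < c) (hu : 0 < u) (hv : 0 < v)
    (huM : u ≤ M) (hvM : v ≤ M) :
    |log (c + u) - log (c + v)| ≤ M / (c + M) * |log u - log v| := by
  simpa only [exp_log hu, exp_log hv] using abs_log_add_exp_sub_le hc (hu.trans_le huM)
    (log_le_log hu huM) (log_le_log hv hvM)

lemma abs_log_sub_le_iff {x y D : ℝ} (hx : 0 < x) (hy : 0 < y) :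
    |log x - log y| ≤ D ↔ x ≤ exp D * y ∧ y ≤ exp D * x := by
  rw [abs_sub_le_iff, sub_le_iff_le_add, sub_le_iff_le_add, log_le_iff_le_exp hx,
    log_le_iff_le_exp hy, exp_add, exp_add, exp_log hx, exp_log hy]

lemma abs_log_sum_mul_sub_le {ι : Type*} {s : Finset ι} {w x y : ι → ℝ} {D : ℝ}
    (hw : ∀ j ∈ s, 0 ≤ w j) (hx : ∀ j ∈ s, 0 < x j) (hy : ∀ j ∈ s, 0 < y j)
    (hxy : ∀ j ∈ s, |log (x j) - log (y j)| ≤ D)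
    (hSx : 0 < ∑ j ∈ s, w j * x j) (hSy : 0 < ∑ j ∈ s, w j * y j) :
    |log (∑ j ∈ s, w j * x j) - log (∑ j ∈ s, w j * y j)| ≤ D := by
  have hxy' := fun j hj => (abs_log_sub_le_iff (hx j hj) (hy j hj)).1 (hxy j hj)
  rw [abs_log_sub_le_iff hSx hSy, mul_sum, mul_sum]
  constructor <;> refine sum_le_sum fun j hj => ?_
  · nlinarith [hw j hj, (hxy' j hj).1]
  · nlinarith [hw j hj, (hxy' j hj).2]

lemma sum_mul_mem_Icc {ι : Type*} {s : Finset ι} {w y : ι → ℝ} {a b : ℝ}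
    (hw : ∀ j ∈ s, 0 ≤ w j) (hy : ∀ j ∈ s, y j ∈ Icc a b) :
    ∑ j ∈ s, w j * y j ∈ Icc ((∑ j ∈ s, w j) * a) ((∑ j ∈ s, w j) * b) := by
  rw [sum_mul, sum_mul]
  exact ⟨sum_le_sum fun j hj => mul_le_mul_of_nonneg_left (hy j hj).1 (hw j hj),
    sum_le_sum fun j hj => mul_le_mul_of_nonneg_left (hy j hj).2 (hw j hj)⟩

theorem stmt_18_general {J : Type*} [Fintype J] [Nonempty J] [DecidableEq J]
    (c₁ c₂ : ℝ) (hc₁ : 0 < c₁) (hc₂ : 0 < c₂)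
    (w : J → ℝ) (hw : ∀ j, 0 ≤ w j)
    (j₀ : J) (a b : ℝ) (ha : 0 < a) (hab : a ≤ b) :
    ∃ α : ℝ, 0 ≤ α ∧ α < 1 ∧
      ∀ x xt : J → ℝ, (∀ j, x j ∈ Set.Icc a b) → (∀ j, xt j ∈ Set.Icc a b) →
        |Real.log ((c₁ / (c₂ + ∑ j ∈ Finset.univ.erase j₀, w j * x j)) /
            (c₁ / (c₂ + ∑ j ∈ Finset.univ.erase j₀, w j * xt j)))|
          ≤ α * Finset.univ.sup' Finset.univ_nonempty
              (fun j => |Real.log (x j / xt j)|) := by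
  set W := ∑ j ∈ univ.erase j₀, w j
  have hW : 0 ≤ W := sum_nonneg fun j _ => hw j
  set M := W * b
  have hM : 0 ≤ M := mul_nonneg hW (ha.trans_le hab).le
  refine ⟨M / (c₂ + M), by positivity, (div_lt_one (by positivity)).2 (by linarith), ?_⟩
  intro x xt hx hxt
  have hpos : ∀ y : J → ℝ, (∀ j, y j ∈ Icc a b) → ∀ j, 0 < y j :=
    fun y hy j => ha.trans_le (hy j).1
  set D := univ.sup' univ_nonempty fun j => |log (x j / xt j)|
  have hD : ∀ j, |log (xt j) - log (x j)| ≤ D := fun j => by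
    rw [abs_sub_comm, ← log_div (hpos x hx j).ne' (hpos xt hxt j).ne']
    exact le_sup' (fun j => |log (x j / xt j)|) (mem_univ j)
  set S := ∑ j ∈ univ.erase j₀, w j * x j
  set St := ∑ j ∈ univ.erase j₀, w j * xt j
  obtain ⟨hSa, hSM⟩ : S ∈ Icc (W * a) M := sum_mul_mem_Icc (fun j _ => hw j) fun j _ => hx j
  obtain ⟨hSta, hStM⟩ : St ∈ Icc (W * a) M := sum_mul_mem_Icc (fun j _ => hw j) fun j _ => hxt j
  rcases hW.eq_or_lt with hW0 | hW0
  · have hS0 : S = 0 := le_antisymm (by simpa [M, ← hW0] using hSM) (by simpa [← hW0] using hSa)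
    have hSt0 : St = 0 :=
      le_antisymm (by simpa [M, ← hW0] using hStM) (by simpa [← hW0] using hSta)
    rw [hS0, hSt0, div_self (div_pos hc₁ (by simpa using hc₂)).ne', log_one, abs_zero]
    exact mul_nonneg (by positivity) ((abs_nonneg _).trans (hD j₀))
  · have hWa : 0 < W * a := mul_pos hW0 ha
    rw [div_div_div_cancel_left' _ _ hc₁.ne', log_div (by linarith) (by linarith)]
    calc |log (c₂ + St) - log (c₂ + S)| ≤ M / (c₂ + M) * |log St - log S| :=
          abs_log_add_sub_le hc₂ (by linarith) (by linarith) hStM hSM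
      _ ≤ M / (c₂ + M) * D := by
          gcongr
          exact abs_log_sum_mul_sub_le (fun j _ => hw j) (fun j _ => hpos xt hxt j)
            (fun j _ => hpos x hx j) (fun j _ => hD j) (by linarith) (by linarith)

theorem stmt_18 {J : Type*} [Fintype J] [Nonempty J] [DecidableEq J]
    (c₁ c₂ : ℝ) (hc₁ : 0 < c₁) (hc₂ : 0 < c₂)
    (w : J → ℝ) (hw : ∀ j, 0 ≤ w j) (hw' : ∃ j, 0 < w j)
    (j₀ : J) (a b : ℝ) (ha : 0 < a) (hab : a ≤ b) :
    ∃ α : ℝ, 0 ≤ α ∧ α < 1 ∧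
      ∀ x xt : J → ℝ, (∀ j, x j ∈ Set.Icc a b) → (∀ j, xt j ∈ Set.Icc a b) →
        |Real.log ((c₁ / (c₂ + ∑ j ∈ Finset.univ.erase j₀, w j * x j)) /
            (c₁ / (c₂ + ∑ j ∈ Finset.univ.erase j₀, w j * xt j)))|
          ≤ α * Finset.univ.sup' Finset.univ_nonempty
              (fun j => |Real.log (x j / xt j)|) :=
  stmt_18_general c₁ c₂ hc₁ hc₂ w hw j₀ a b ha hab
end

section
/- Let q be a probability distribution on {0,1,…,m} × {0,1,…,n} (values of a pair (a,b)), and suppose there exist numbers q_{i,j} ≥ 0 (i ∈ {0,…,n}, j ∈ {0,…,m}) with Σ_{j=0}^m q_{i,j} = 1 for the fixed row i, Σ_{i=0}^n q_{i,j} = 1 for the fixed column j, and a fixed pair (i,j) with q_{i,j} < 1, such that q(a=j, b=i) = q_{i,j}, q(a=j', b=i') = q_{i,j'}·q_{i',j}/(1 − q_{i,j}) for j' ≠ j, i' ≠ i, and q(a,b) = 0 otherwise. Then the mutual information of (a,b) under q satisfies I(a;b) = −q_{i,j} log q_{i,j} − (1 − q_{i,j}) log(1 − q_{i,j}). -/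
lemma aux_term (x y d : ℝ) (hx : 0 ≤ x) (hy : 0 ≤ y) (hd : 0 < d) :
    (x * y / d) * Real.log (x * y / d)
      = y * (x * Real.log x / d) + (y * Real.log y) * (x / d)
        - y * (x * Real.log d / d) := by
  rcases eq_or_lt_of_le hx with h | hx'
  · simp [← h]
  rcases eq_or_lt_of_le hy with h | hy'
  · simp [← h]
  rw [Real.log_div (by positivity) (ne_of_gt hd), Real.log_mul (ne_of_gt hx') (ne_of_gt hy')]
  field_simp

theorem stmt_19 (n m : ℕ) (r : Fin (m + 1) → ℝ) (c : Fin (n + 1) → ℝ)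
    (j₀ : Fin (m + 1)) (i₀ : Fin (n + 1))
    (hr0 : ∀ j, 0 ≤ r j) (hc0 : ∀ i, 0 ≤ c i)
    (hr1 : ∑ j, r j = 1) (hc1 : ∑ i, c i = 1)
    (heq : r j₀ = c i₀) (hlt : r j₀ < 1)
    (Q : Fin (m + 1) → Fin (n + 1) → ℝ)
    (hQ : ∀ j i, Q j i =
      if j = j₀ ∧ i = i₀ then r j₀
      else if j ≠ j₀ ∧ i ≠ i₀ then r j * c i / (1 - r j₀)
      else 0) :
    (-∑ j, r j * Real.log (r j)) + (-∑ i, c i * Real.log (c i))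
        - (-∑ j, ∑ i, Q j i * Real.log (Q j i))
      = -(r j₀ * Real.log (r j₀)) - (1 - r j₀) * Real.log (1 - r j₀) := by
  set p := r j₀ with hp
  have hd : 0 < 1 - p := by linarith
  have hdne : (1:ℝ) - p ≠ 0 := ne_of_gt hd
  have hrs : ∑ j ∈ Finset.univ.erase j₀, r j = 1 - p := by
    have h := Finset.add_sum_erase Finset.univ r (Finset.mem_univ j₀)
    rw [hr1] at h; linarith
  have hcs : ∑ i ∈ Finset.univ.erase i₀, c i = 1 - p := by
    have h := Finset.add_sum_erase Finset.univ c (Finset.mem_univ i₀)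
    rw [hc1] at h; linarith [heq]
  set A := ∑ j, r j * Real.log (r j) with hA
  set B := ∑ i, c i * Real.log (c i) with hB
  set A' := ∑ j ∈ Finset.univ.erase j₀, r j * Real.log (r j) with hA'
  set B' := ∑ i ∈ Finset.univ.erase i₀, c i * Real.log (c i) with hB'
  have hAA : A = p * Real.log p + A' := by
    rw [hA, hA', ← Finset.add_sum_erase Finset.univ _ (Finset.mem_univ j₀)]
  have hBB : B = p * Real.log p + B' := by
    rw [hB, hB', ← Finset.add_sum_erase Finset.univ _ (Finset.mem_univ i₀), heq]
  have hj0 : ∑ i, Q j₀ i * Real.log (Q j₀ i) = p * Real.log p := by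
    have h1 : ∀ i, Q j₀ i * Real.log (Q j₀ i)
        = if i = i₀ then p * Real.log p else 0 := by
      intro i
      rw [hQ]
      by_cases hi : i = i₀ <;> simp [hi]
    rw [Finset.sum_congr rfl fun i _ => h1 i, Finset.sum_ite_eq' Finset.univ i₀]
    simp
  have hjne : ∀ j ∈ Finset.univ.erase j₀,
      ∑ i, Q j i * Real.log (Q j i)
        = r j * Real.log (r j) + B' * (r j / (1 - p)) - r j * Real.log (1 - p) := by
    intro j hj
    have hjj : j ≠ j₀ := Finset.ne_of_mem_erase hj
    have step1 : ∑ i, Q j i * Real.log (Q j i)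
        = ∑ i ∈ Finset.univ.erase i₀,
            (r j * c i / (1 - p)) * Real.log (r j * c i / (1 - p)) := by
      rw [← Finset.add_sum_erase Finset.univ
        (fun i => Q j i * Real.log (Q j i)) (Finset.mem_univ i₀)]
      have h0 : Q j i₀ = 0 := by rw [hQ]; simp [hjj]
      rw [h0]
      simp only [zero_mul, zero_add]
      refine Finset.sum_congr rfl fun i hi => ?_
      have hii : i ≠ i₀ := Finset.ne_of_mem_erase hi
      rw [hQ]
      simp [hjj, hii]
    rw [step1]
    calc ∑ i ∈ Finset.univ.erase i₀,
            (r j * c i / (1 - p)) * Real.log (r j * c i / (1 - p))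
        = ∑ i ∈ Finset.univ.erase i₀,
            (c i * (r j * Real.log (r j) / (1 - p))
              + (c i * Real.log (c i)) * (r j / (1 - p))
              - c i * (r j * Real.log (1 - p) / (1 - p))) := by
          refine Finset.sum_congr rfl fun i hi => ?_
          exact aux_term (r j) (c i) (1 - p) (hr0 j) (hc0 i) hd
      _ = (1 - p) * (r j * Real.log (r j) / (1 - p))
            + B' * (r j / (1 - p))
            - (1 - p) * (r j * Real.log (1 - p) / (1 - p)) := by
          rw [Finset.sum_sub_distrib, Finset.sum_add_distrib,
            ← Finset.sum_mul, ← Finset.sum_mul, ← Finset.sum_mul, hcs, hB']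
      _ = r j * Real.log (r j) + B' * (r j / (1 - p)) - r j * Real.log (1 - p) := by
          field_simp
  have hjoint : ∑ j, ∑ i, Q j i * Real.log (Q j i)
      = p * Real.log p + A' + B' - (1 - p) * Real.log (1 - p) := by
    rw [← Finset.add_sum_erase Finset.univ
      (fun j => ∑ i, Q j i * Real.log (Q j i)) (Finset.mem_univ j₀), hj0,
      Finset.sum_congr rfl hjne, Finset.sum_sub_distrib, Finset.sum_add_distrib,
      ← Finset.sum_mul, ← Finset.mul_sum, ← Finset.sum_div, hrs, ← hA']
    field_simp
    ring
  rw [hjoint, hAA, hBB]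
  ring
end
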